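/- Let ω be a constant-coefficient presymplectic form on a real normed space E, and let X : ℝ → E → E be a t-dependent vector field such that each X_t is a Hamiltonian vector field (with respect to ω) of some twice continuously differentiable function. Let f, g : E → ℝ be twice continuously differentiable with differentiable Hamiltonian vector fields X_f, X_g, and set {f,g}(x) := (fderiv ℝ f x)(X_g x). If f and g are t-independent constants of motion of X, i.e. (fderiv ℝ f x)(X_t x) = 0 and (fderiv ℝ g x)(X_t x) = 0 for all t and x, then {f,g} is again a t-independent constant of motion of X: (fderiv ℝ {f,g} x)(X_t x) = 0 for all t and x. -/

import Mathlib

/-!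
Since `df = ω(X_f, ·)`, the bracket `{f, g} = ω(X_f, X_g)` is Hamiltonian with Hamiltonian vector
field the Lie bracket `[X_g, X_f]`; this uses the symmetry of the second derivatives of `f` and `g`.
If `X_t = X_h`, antisymmetry of `ω` turns "`f` and `g` are constants of motion of `X_h`" into
"`h` is a constant of motion of `X_f` and `X_g`", hence of `[X_g, X_f]`. Therefore
`d{f, g}(X_h) = ω([X_g, X_f], X_h) = -dh([X_g, X_f]) = 0`.
-/

open VectorField

section

variable {𝕜 E : Type*} [NontriviallyNormedField 𝕜] [NormedAddCommGroup E] [NormedSpace 𝕜 E]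

def IsHamiltonianVectorField (ω : E →L[𝕜] E →L[𝕜] 𝕜) (k : E → 𝕜) (Y : E → E) : Prop :=
  ∀ x w, ω (Y x) w = fderiv 𝕜 k x w

/-- `{f, g}`, relative to the chosen Hamiltonian vector field `Xg` of `g`. -/
noncomputable def poissonBracket (f : E → 𝕜) (Xg : E → E) (y : E) : 𝕜 :=
  fderiv 𝕜 f y (Xg y)

lemma ContinuousLinearMap.apply_swap_of_apply_self_eq_zero {ω : E →L[𝕜] E →L[𝕜] 𝕜}
    (halt : ∀ v, ω v v = 0) (v w : E) : ω w v = -ω v w :=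
  (LinearMap.IsAlt.neg (B := ω.toLinearMap₁₂) halt v w).symm

lemma fderiv_apply_lieBracket_eq_zero {F : Type*} [NormedAddCommGroup F] [NormedSpace 𝕜 F]
    {h : E → F} {V W : E → E} {x : E} {n : WithTop ℕ∞}
    (hh : ContDiffAt 𝕜 n h x) (hn : minSmoothness 𝕜 2 ≤ n)
    (hV : DifferentiableAt 𝕜 V x) (hW : DifferentiableAt 𝕜 W x)
    (hhV : ∀ y, fderiv 𝕜 h y (V y) = 0) (hhW : ∀ y, fderiv 𝕜 h y (W y) = 0) :
    fderiv 𝕜 h x (lieBracket 𝕜 V W x) = 0 := by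
  rw [fderiv_apply_lieBracket hh hn hW hV, funext hhV, funext hhW]
  simp

namespace IsHamiltonianVectorField

variable {ω : E →L[𝕜] E →L[𝕜] 𝕜} {k l : E → 𝕜} {Y Z : E → E} {x : E}

lemma fderiv_eq (hY : IsHamiltonianVectorField ω k Y) : fderiv 𝕜 k = fun y => ω (Y y) :=
  funext fun y => ContinuousLinearMap.ext fun w => (hY y w).symm

lemma hasFDerivAt_fderiv (hY : IsHamiltonianVectorField ω k Y) (hYx : DifferentiableAt 𝕜 Y x) :
    HasFDerivAt (fderiv 𝕜 k) (ω.comp (fderiv 𝕜 Y x)) x := by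
  rw [hY.fderiv_eq]
  exact ω.hasFDerivAt.comp x hYx.hasFDerivAt

lemma apply_fderiv_comm (hY : IsHamiltonianVectorField ω k Y) (hYx : DifferentiableAt 𝕜 Y x)
    (hk : IsSymmSndFDerivAt 𝕜 k x) (v w : E) :
    ω (fderiv 𝕜 Y x v) w = ω (fderiv 𝕜 Y x w) v := by
  simpa [(hY.hasFDerivAt_fderiv hYx).fderiv] using hk v w

lemma apply_right (halt : ∀ v, ω v v = 0) (hY : IsHamiltonianVectorField ω k Y) (x w : E) :
    ω w (Y x) = -fderiv 𝕜 k x w := by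
  rw [ω.apply_swap_of_apply_self_eq_zero halt, hY]

lemma fderiv_apply_eq_neg (halt : ∀ v, ω v v = 0) (hY : IsHamiltonianVectorField ω k Y)
    (hZ : IsHamiltonianVectorField ω l Z) (x : E) :
    fderiv 𝕜 k x (Z x) = -fderiv 𝕜 l x (Y x) := by
  rw [← hY, hZ.apply_right halt]

theorem fderiv_poissonBracket (halt : ∀ v, ω v v = 0)
    (hY : IsHamiltonianVectorField ω k Y) (hZ : IsHamiltonianVectorField ω l Z)
    (hYx : DifferentiableAt 𝕜 Y x) (hZx : DifferentiableAt 𝕜 Z x)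
    (hk : IsSymmSndFDerivAt 𝕜 k x) (hl : IsSymmSndFDerivAt 𝕜 l x) (v : E) :
    fderiv 𝕜 (poissonBracket k Z) x v = ω (lieBracket 𝕜 Z Y x) v := by
  have hbracket : HasFDerivAt (poissonBracket k Z)
      ((fderiv 𝕜 k x).comp (fderiv 𝕜 Z x) + (ω.comp (fderiv 𝕜 Y x)).flip (Z x)) x :=
    (hY.hasFDerivAt_fderiv hYx).clm_apply hZx.hasFDerivAt
  rw [hbracket.fderiv]
  simp only [add_apply, ContinuousLinearMap.comp_apply,
    ContinuousLinearMap.flip_apply, lieBracket, map_sub, sub_apply]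
  rw [← hY, ω.apply_swap_of_apply_self_eq_zero halt (fderiv 𝕜 Z x v),
    hZ.apply_fderiv_comm hZx hl, hY.apply_fderiv_comm hYx hk]
  ring

end IsHamiltonianVectorField

end

open IsHamiltonianVectorField in
/-- The Poisson bracket of two t-independent constants of motion
of a t-dependent vector field whose instances are Hamiltonian (with respect to
a constant-coefficient presymplectic form) is again a t-independent constant
of motion. -/
theorem poisson_bracket_constant_of_motion
    {E : Type*} [NormedAddCommGroup E] [NormedSpace ℝ E]
    (ω : E →L[ℝ] E →L[ℝ] ℝ) (halt : ∀ v : E, ω v v = 0)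
    (X : ℝ → E → E)
    (hX : ∀ t : ℝ, ∃ h : E → ℝ, ContDiff ℝ 2 h ∧
      ∀ x w : E, ω (X t x) w = fderiv ℝ h x w)
    (f g : E → ℝ) (hf : ContDiff ℝ 2 f) (hg : ContDiff ℝ 2 g)
    (Xf Xg : E → E) (hXf : Differentiable ℝ Xf) (hXg : Differentiable ℝ Xg)
    (hHf : ∀ x w : E, ω (Xf x) w = fderiv ℝ f x w)
    (hHg : ∀ x w : E, ω (Xg x) w = fderiv ℝ g x w)
    (hfCM : ∀ t : ℝ, ∀ x : E, fderiv ℝ f x (X t x) = 0)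
    (hgCM : ∀ t : ℝ, ∀ x : E, fderiv ℝ g x (X t x) = 0) :
    ∀ t : ℝ, ∀ x : E,
      fderiv ℝ (fun y => fderiv ℝ f y (Xg y)) x (X t x) = 0 := by
  intro t x
  obtain ⟨h, hh, hXt⟩ := hX t
  have hsymm {k : E → ℝ} (hk : ContDiff ℝ 2 k) : IsSymmSndFDerivAt ℝ k x :=
    hk.contDiffAt.isSymmSndFDerivAt (by simp)
  have hhXf (y : E) : fderiv ℝ h y (Xf y) = 0 := by
    rw [fderiv_apply_eq_neg halt hXt hHf, hfCM, neg_zero]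
  have hhXg (y : E) : fderiv ℝ h y (Xg y) = 0 := by
    rw [fderiv_apply_eq_neg halt hXt hHg, hgCM, neg_zero]
  calc fderiv ℝ (poissonBracket f Xg) x (X t x)
      = ω (lieBracket ℝ Xg Xf x) (X t x) :=
        fderiv_poissonBracket halt hHf hHg (hXf x) (hXg x) (hsymm hf) (hsymm hg) _
    _ = -fderiv ℝ h x (lieBracket ℝ Xg Xf x) := apply_right halt hXt x _
    _ = 0 := by
      rw [fderiv_apply_lieBracket_eq_zero hh.contDiffAt (by simp) (hXg x) (hXf x) hhXg hhXf,
        neg_zero]
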